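/- Define the quadratic forms Q₁ := −2u² − 2uv + 4uw − 2v² + 6vw − 5w², Q₂ := 10uv − 20uw + 5v² − 20vw + 20w², Q₃ := −48u² − 48uv + 96uw − 20v² + 88vw − 92w² on ℝ³. Let ℝP¹ be the quotient topological space of ℝ²∖{0} by the scaling action of ℝ∖{0}, and let S₁ := { [t₀ : t₁] ∈ ℝP¹ : ∃ (u,v,w) ∈ ℝ³∖{0}, t₀²Q₁(u,v,w) + 2t₀t₁Q₂(u,v,w) + t₁²Q₃(u,v,w) ≥ 0 }. Then S₁ has exactly three connected components. (Consequently the real locus Y(ℝ) of the associated double cover has exactly three connected components; in this example the real isotopy class of the discriminant quartic Δ is three ovals.) -/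

import Mathlib

/-- The scaling relation on nonzero vectors of `ℝⁿ`. -/
def projRel (n : ℕ) (v w : {x : Fin n → ℝ // x ≠ 0}) : Prop :=
  ∃ c : ℝ, c ≠ 0 ∧ c • (v : Fin n → ℝ) = (w : Fin n → ℝ)

/-- The real projective space `ℝPⁿ⁻¹`, as the quotient topological space of `ℝⁿ ∖ {0}` by the
scaling action of `ℝ ∖ {0}`. -/
def RP (n : ℕ) : Type := Quot (projRel n)

instance (n : ℕ) : TopologicalSpace (RP n) :=
  inferInstanceAs (TopologicalSpace (Quot (projRel n)))

/-- `Q₁ = −2u² − 2uv + 4uw − 2v² + 6vw − 5w²`. -/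
def Q₁ (u v w : ℝ) : ℝ :=
  -2 * u ^ 2 - 2 * u * v + 4 * u * w - 2 * v ^ 2 + 6 * v * w - 5 * w ^ 2

/-- `Q₂ = 10uv − 20uw + 5v² − 20vw + 20w²`. -/
def Q₂ (u v w : ℝ) : ℝ :=
  10 * u * v - 20 * u * w + 5 * v ^ 2 - 20 * v * w + 20 * w ^ 2

/-- `Q₃ = −48u² − 48uv + 96uw − 20v² + 88vw − 92w²`. -/
def Q₃ (u v w : ℝ) : ℝ :=
  -48 * u ^ 2 - 48 * u * v + 96 * u * w - 20 * v ^ 2 + 88 * v * w - 92 * w ^ 2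

/-!
The form `a²Q₁ + 2abQ₂ + b²Q₃` has leading principal minors `-2a² - 48b² < 0` and
`3a⁴ - 12a²b² + 384b⁴ > 0` for `(a, b) ≠ 0`, so by completing squares it is negative definite
exactly when its determinant `-(a² - 36b²)(a² - 16b²)(a² - 4b²)` is negative. Hence `S₁` misses
`[1 : 0]`, and in the chart `r ↦ [r : 1]`, which is an open embedding of `ℝ` into `ℝP¹`, it is the
union of `[-6, -4]`, `[-2, 2]` and `[4, 6]`: three connected sets separated by disjoint open sets.
-/

open Set Topology Function

theorem isClopen_of_pairwise_disjoint_of_iUnion_eq_univ {X ι : Type*} [TopologicalSpace X]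
    {U : ι → Set X} (hU : ∀ i, IsOpen (U i)) (hU_disj : Pairwise (Disjoint on U))
    (hU_cover : ⋃ i, U i = univ) (i : ι) : IsClopen (U i) := by
  refine ⟨⟨?_⟩, hU i⟩
  have hU_compl : (U i)ᶜ = ⋃ (j) (_ : j ≠ i), U j := by
    ext x
    obtain ⟨j, hj⟩ := mem_iUnion.mp (hU_cover.symm ▸ mem_univ x)
    simp only [mem_compl_iff, mem_iUnion, exists_prop]
    refine ⟨fun hi => ⟨j, fun h => hi (h ▸ hj), hj⟩, ?_⟩
    rintro ⟨k, hki, hk⟩ hi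
    exact disjoint_left.mp (hU_disj hki) hk hi
  rw [hU_compl]
  exact isOpen_biUnion fun j _ => hU j

theorem nonempty_connectedComponents_iUnion_equiv {X ι : Type*} [TopologicalSpace X]
    {A V : ι → Set X} (hV : ∀ i, IsOpen (V i)) (hV_disj : Pairwise (Disjoint on V))
    (hAV : ∀ i, A i ⊆ V i) (hA : ∀ i, IsConnected (A i)) :
    Nonempty (ConnectedComponents (⋃ i, A i) ≃ ι) := by
  let U (i : ι) : Set (⋃ i, A i) := Subtype.val ⁻¹' V i
  have hU_eq (i : ι) : U i = Subtype.val ⁻¹' A i := by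
    ext ⟨x, hx⟩
    obtain ⟨j, hj⟩ := mem_iUnion.mp hx
    refine ⟨fun hi => ?_, fun hi => hAV i hi⟩
    obtain rfl : i = j := hV_disj.eq (not_disjoint_iff.mpr ⟨x, hi, hAV j hj⟩)
    exact hj
  have hU_open (i : ι) : IsOpen (U i) := (hV i).preimage continuous_subtype_val
  have hU_disj : Pairwise (Disjoint on U) := fun i j hij => (hV_disj hij).preimage _
  have hU_cover : ⋃ i, U i = univ := by
    simp only [hU_eq, ← preimage_iUnion, Subtype.coe_preimage_self]
  have hU_conn (i : ι) : IsConnected (U i) := by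
    have himage : Subtype.val '' U i = A i := by
      rw [hU_eq, Subtype.image_preimage_coe, inter_eq_right.mpr (subset_iUnion A i)]
    refine ⟨(himage ▸ (hA i).nonempty).of_image, ?_⟩
    exact IsInducing.subtypeVal.isPreconnected_image.mp (himage ▸ (hA i).isPreconnected)
  exact ⟨ConnectedComponents.equivOfIsClopenOfIsConnected
    (isClopen_of_pairwise_disjoint_of_iUnion_eq_univ hU_open hU_disj hU_cover)
    hU_disj hU_cover hU_conn⟩

theorem projRel_equivalence (n : ℕ) : Equivalence (projRel n) where
  refl _ := ⟨1, one_ne_zero, one_smul ℝ _⟩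
  symm := fun ⟨c, hc, h⟩ => ⟨c⁻¹, inv_ne_zero hc, by rw [← h, inv_smul_smul₀ hc]⟩
  trans := fun ⟨c, hc, h⟩ ⟨d, hd, h'⟩ => ⟨d * c, mul_ne_zero hd hc, by rw [mul_smul, h, h']⟩

theorem exists_coord_ne_zero (t : {x : Fin 2 → ℝ // x ≠ 0}) : t.1 0 ≠ 0 ∨ t.1 1 ≠ 0 := by
  by_contra! h
  exact t.2 (funext fun i => by fin_cases i <;> simp [h])

namespace RP

def mk {n : ℕ} (v : {x : Fin n → ℝ // x ≠ 0}) : RP n := Quot.mk _ v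

theorem isQuotientMap_mk (n : ℕ) : IsQuotientMap (mk : {x : Fin n → ℝ // x ≠ 0} → RP n) :=
  isQuotientMap_quot_mk

theorem mk_eq_mk_iff {n : ℕ} {v w : {x : Fin n → ℝ // x ≠ 0}} : mk v = mk w ↔ projRel n v w :=
  ⟨fun h => (projRel_equivalence n).eqvGen_iff.mp (Quot.eqvGen_exact h), Quot.sound⟩

def affineChart (r : ℝ) : RP 2 :=
  mk ⟨![r, 1], fun h => one_ne_zero (congrFun h 1)⟩

theorem affineChart_eq_mk_iff {r : ℝ} {t : {x : Fin 2 → ℝ // x ≠ 0}} :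
    affineChart r = mk t ↔ t.1 1 ≠ 0 ∧ t.1 0 / t.1 1 = r := by
  rw [affineChart, mk_eq_mk_iff]
  constructor
  · rintro ⟨c, hc, h⟩
    have h0 : c * r = t.1 0 := by simpa using congrFun h 0
    obtain rfl : c = t.1 1 := by simpa using congrFun h 1
    exact ⟨hc, by rw [← h0, mul_div_cancel_left₀ r hc]⟩
  · rintro ⟨ht, rfl⟩
    refine ⟨t.1 1, ht, funext fun i => ?_⟩
    fin_cases i <;> simp [mul_div_cancel₀ _ ht]

theorem affineChart_injective : Injective affineChart := fun r s h => by
  simpa using (affineChart_eq_mk_iff.mp h).2.symm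

theorem continuous_affineChart : Continuous affineChart := by
  refine (isQuotientMap_mk 2).continuous.comp (.subtype_mk (continuous_pi fun i => ?_) _)
  fin_cases i
  · exact continuous_id
  · exact continuous_const

theorem isOpenMap_affineChart : IsOpenMap affineChart := by
  intro U hU
  rw [← (isQuotientMap_mk 2).isOpen_preimage]
  have hpre : mk ⁻¹' (affineChart '' U) = {t | t.1 1 ≠ 0} ∩ (fun t => t.1 0 / t.1 1) ⁻¹' U := by
    ext t
    simp only [mem_preimage, mem_image, mem_inter_iff, mem_ofPred_eq, affineChart_eq_mk_iff]
    exact ⟨fun ⟨r, hr, ht, hrt⟩ => ⟨ht, hrt ▸ hr⟩, fun ⟨ht, hr⟩ => ⟨_, hr, ht, rfl⟩⟩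
  have hcoord (i : Fin 2) : Continuous fun t : {x : Fin 2 → ℝ // x ≠ 0} => t.1 i :=
    (continuous_apply i).comp continuous_subtype_val
  rw [hpre]
  refine ContinuousOn.isOpen_inter_preimage ?_ (isOpen_ne_fun (hcoord 1) continuous_const) hU
  exact (hcoord 0).continuousOn.div (hcoord 1).continuousOn fun _ ht => ht

end RP

def ternaryForm (A B C D E F u v w : ℝ) : ℝ :=
  A * u ^ 2 + 2 * B * u * v + 2 * C * u * w + D * v ^ 2 + 2 * E * v * w + F * w ^ 2

def ternaryDet (A B C D E F : ℝ) : ℝ := !![A, B, C; B, D, E; C, E, F].det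

section TernaryForm

variable {A B C D E F : ℝ}

theorem ternaryDet_eq :
    ternaryDet A B C D E F = A * (D * F - E ^ 2) - B * (B * F - C * E) + C * (B * E - C * D) := by
  rw [ternaryDet, Matrix.det_fin_three]
  simp only [Fin.isValue, Matrix.of_apply, Matrix.cons_val', Matrix.cons_val_zero,
    Matrix.cons_val_fin_one, Matrix.cons_val_one, Matrix.cons_val]
  ring

theorem ternaryForm_mul_eq_sum_sq (u v w : ℝ) :
    A * (A * D - B ^ 2) * ternaryForm A B C D E F u v w =
      (A * D - B ^ 2) * (A * u + B * v + C * w) ^ 2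
        + ((A * D - B ^ 2) * v + (A * E - B * C) * w) ^ 2
        + A * ternaryDet A B C D E F * w ^ 2 := by
  rw [ternaryDet_eq]; unfold ternaryForm; ring

/-- `M * adjugate M = det M • 1` for the Gram matrix `M`, read off in the last column. -/
theorem ternaryForm_adjugate_col :
    ternaryForm A B C D E F (B * E - C * D) (B * C - A * E) (A * D - B ^ 2) =
      (A * D - B ^ 2) * ternaryDet A B C D E F := by
  rw [ternaryDet_eq]; unfold ternaryForm; ring

theorem eq_zero_of_ternaryForm_nonneg (hA : A < 0) (hm : 0 < A * D - B ^ 2)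
    (hdet : ternaryDet A B C D E F < 0) {u v w : ℝ}
    (hq : 0 ≤ ternaryForm A B C D E F u v w) : (u, v, w) = (0, 0, 0) := by
  have hsum : A * (A * D - B ^ 2) * ternaryForm A B C D E F u v w ≤ 0 :=
    mul_nonpos_of_nonpos_of_nonneg (mul_nonpos_of_nonpos_of_nonneg hA.le hm.le) hq
  rw [ternaryForm_mul_eq_sum_sq] at hsum
  have h₁ := mul_nonneg hm.le (sq_nonneg (A * u + B * v + C * w))
  have h₂ := sq_nonneg ((A * D - B ^ 2) * v + (A * E - B * C) * w)
  have h₃ := mul_nonneg (mul_pos_of_neg_of_neg hA hdet).le (sq_nonneg w)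
  obtain rfl : w = 0 := by
    have : A * ternaryDet A B C D E F * w ^ 2 = 0 := by linarith
    simpa [hA.ne, hdet.ne] using this
  obtain rfl : v = 0 := by
    have : ((A * D - B ^ 2) * v) ^ 2 = 0 := by linarith
    simpa [hm.ne'] using this
  obtain rfl : u = 0 := by
    have : (A * D - B ^ 2) * (A * u) ^ 2 = 0 := by linarith
    simpa [hm.ne', hA.ne] using this
  rfl

theorem exists_ternaryForm_nonneg_iff (hA : A < 0) (hm : 0 < A * D - B ^ 2) :
    (∃ u v w : ℝ, (u, v, w) ≠ (0, 0, 0) ∧ 0 ≤ ternaryForm A B C D E F u v w) ↔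
      0 ≤ ternaryDet A B C D E F := by
  refine ⟨fun ⟨u, v, w, hne, hq⟩ => ?_, fun hdet => ?_⟩
  · by_contra! hdet
    exact hne (eq_zero_of_ternaryForm_nonneg hA hm hdet hq)
  · refine ⟨B * E - C * D, B * C - A * E, A * D - B ^ 2, fun h => hm.ne' (by simp_all), ?_⟩
    rw [ternaryForm_adjugate_col]
    exact mul_nonneg hm.le hdet

end TernaryForm

theorem sub_mul_sub_mul_sub_nonpos_iff {a b c x : ℝ} (hab : a ≤ b) (hbc : b ≤ c) :
    (x - c) * (x - b) * (x - a) ≤ 0 ↔ x ≤ a ∨ b ≤ x ∧ x ≤ c := by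
  constructor
  · intro h
    by_contra! h'
    rcases le_or_gt x b with hx | hx
    · have hxb : x < b := lt_of_le_of_ne hx fun hb => by linarith [h'.2 hb.ge]
      have := mul_pos (mul_pos_of_neg_of_neg (by linarith : x - c < 0) (by linarith : x - b < 0))
        (by linarith : 0 < x - a)
      linarith
    · have := mul_pos (mul_pos (by linarith [h'.2 hx.le] : 0 < x - c) (by linarith : 0 < x - b))
        (by linarith : 0 < x - a)
      linarith
  · rintro (hx | ⟨hx, hx'⟩)
    · exact mul_nonpos_of_nonneg_of_nonpos
        (mul_nonneg_of_nonpos_of_nonpos (by linarith) (by linarith)) (by linarith)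
    · exact mul_nonpos_of_nonpos_of_nonneg
        (mul_nonpos_of_nonpos_of_nonneg (by linarith) (by linarith)) (by linarith)

namespace ThreeOvals

def pencilDiscr (a b : ℝ) : ℝ :=
  (a ^ 2 - 36 * b ^ 2) * (a ^ 2 - 16 * b ^ 2) * (a ^ 2 - 4 * b ^ 2)

theorem pencilDiscr_mul (c a b : ℝ) : pencilDiscr (c * a) (c * b) = c ^ 6 * pencilDiscr a b := by
  unfold pencilDiscr; ring

theorem exists_pencil_nonneg_iff {a b : ℝ} (hab : a ≠ 0 ∨ b ≠ 0) :
    (∃ u v w : ℝ, (u, v, w) ≠ (0, 0, 0) ∧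
        0 ≤ a ^ 2 * Q₁ u v w + 2 * a * b * Q₂ u v w + b ^ 2 * Q₃ u v w) ↔
      pencilDiscr a b ≤ 0 := by
  have hform (u v w : ℝ) : a ^ 2 * Q₁ u v w + 2 * a * b * Q₂ u v w + b ^ 2 * Q₃ u v w =
      ternaryForm (-2 * a ^ 2 - 48 * b ^ 2) (-a ^ 2 + 10 * a * b - 24 * b ^ 2)
        (2 * a ^ 2 - 20 * a * b + 48 * b ^ 2) (-2 * a ^ 2 + 10 * a * b - 20 * b ^ 2)
        (3 * a ^ 2 - 20 * a * b + 44 * b ^ 2) (-5 * a ^ 2 + 40 * a * b - 92 * b ^ 2) u v w := by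
    unfold ternaryForm Q₁ Q₂ Q₃; ring
  have hsq : 0 < a ^ 2 + b ^ 2 := by rcases hab with h | h <;> positivity
  have hA : -2 * a ^ 2 - 48 * b ^ 2 < 0 := by nlinarith
  have hm : 0 < (-2 * a ^ 2 - 48 * b ^ 2) * (-2 * a ^ 2 + 10 * a * b - 20 * b ^ 2)
      - (-a ^ 2 + 10 * a * b - 24 * b ^ 2) ^ 2 := by
    nlinarith [sq_nonneg (2 * a ^ 2 - 7 * b ^ 2), sq_nonneg (b ^ 2), mul_pos hsq hsq]
  simp only [hform]
  rw [exists_ternaryForm_nonneg_iff hA hm, ← neg_nonneg (a := pencilDiscr a b), ternaryDet_eq]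
  exact iff_of_eq (congrArg _ (by unfold pencilDiscr; ring))

open RP in
theorem exists_mk_eq_pencilDiscr_nonpos_iff (x : RP 2) :
    (∃ t, mk t = x ∧ pencilDiscr (t.1 0) (t.1 1) ≤ 0) ↔
      x ∈ affineChart '' {r | pencilDiscr r 1 ≤ 0} := by
  constructor
  · rintro ⟨t, rfl, ht⟩
    have h₁ : t.1 1 ≠ 0 := by
      intro h
      have h₀ : t.1 0 ≠ 0 := (exists_coord_ne_zero t).resolve_right (not_not.mpr h)
      rw [h] at ht
      have : 0 < pencilDiscr (t.1 0) 0 := by unfold pencilDiscr; ring_nf; positivity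
      linarith
    have hscale : pencilDiscr (t.1 0) (t.1 1) = t.1 1 ^ 6 * pencilDiscr (t.1 0 / t.1 1) 1 := by
      rw [← pencilDiscr_mul, mul_div_cancel₀ _ h₁, mul_one]
    refine ⟨t.1 0 / t.1 1, ?_, affineChart_eq_mk_iff.mpr ⟨h₁, rfl⟩⟩
    rw [hscale] at ht
    exact nonpos_of_mul_nonpos_right ht (by positivity)
  · rintro ⟨r, hr, rfl⟩
    exact ⟨_, rfl, by simpa using hr⟩

theorem setOf_exists_pencil_nonneg :
    {x : RP 2 | ∃ t : {x : Fin 2 → ℝ // x ≠ 0}, Quot.mk (projRel 2) t = x ∧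
      ∃ u v w : ℝ, (u, v, w) ≠ (0, 0, 0) ∧
        0 ≤ (t : Fin 2 → ℝ) 0 ^ 2 * Q₁ u v w
          + 2 * (t : Fin 2 → ℝ) 0 * (t : Fin 2 → ℝ) 1 * Q₂ u v w
          + (t : Fin 2 → ℝ) 1 ^ 2 * Q₃ u v w} =
      RP.affineChart '' {r | pencilDiscr r 1 ≤ 0} := by
  ext x
  rw [← exists_mk_eq_pencilDiscr_nonpos_iff]
  exact exists_congr fun t => and_congr Iff.rfl (exists_pencil_nonneg_iff (exists_coord_ne_zero t))

def arc : Fin 3 → Set ℝ := ![Icc (-6) (-4), Icc (-2) 2, Icc 4 6]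

def arcNbhd : Fin 3 → Set ℝ := ![Iio (-3), Ioo (-3) 3, Ioi 3]

theorem iUnion_arc : ⋃ i, arc i = {r | pencilDiscr r 1 ≤ 0} := by
  ext r
  have hr : pencilDiscr r 1 = (r ^ 2 - 36) * (r ^ 2 - 16) * (r ^ 2 - 4) := by
    unfold pencilDiscr; ring
  simp only [arc, mem_iUnion, Fin.exists_fin_succ, IsEmpty.exists_iff, or_false, Fin.isValue,
    Matrix.cons_val_zero, Matrix.cons_val_succ, mem_Icc, mem_ofPred_eq, hr,
    sub_mul_sub_mul_sub_nonpos_iff (by norm_num : (4 : ℝ) ≤ 16) (by norm_num : (16 : ℝ) ≤ 36)]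
  constructor
  · rintro (⟨h, h'⟩ | ⟨h, h'⟩ | ⟨h, h'⟩)
    · right; constructor <;> nlinarith
    · left; nlinarith
    · right; constructor <;> nlinarith
  · rintro (h | ⟨h, h'⟩)
    · right; left; constructor <;> nlinarith
    · rcases le_total r 0 with hr | hr
      · left; constructor <;> nlinarith
      · right; right; constructor <;> nlinarith

theorem isConnected_arc (i : Fin 3) : IsConnected (arc i) := by
  fin_cases i <;> exact isConnected_Icc (by norm_num)

theorem isOpen_arcNbhd (i : Fin 3) : IsOpen (arcNbhd i) := by
  fin_cases i
  exacts [isOpen_Iio, isOpen_Ioo, isOpen_Ioi]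

theorem arc_subset_arcNbhd (i : Fin 3) : arc i ⊆ arcNbhd i := by
  fin_cases i <;> intro r ⟨h₁, h₂⟩ <;> simp [arcNbhd] <;> (try constructor) <;> linarith

theorem pairwise_disjoint_arcNbhd : Pairwise (Disjoint on arcNbhd) := by
  intro i j hij
  fin_cases i <;> fin_cases j <;> simp_all [arcNbhd, onFun, disjoint_left] <;> intros <;> linarith

end ThreeOvals

open ThreeOvals RP in
/-- For the quadrics of the three-ovals example, the image `S₁ ⊆ ℝP¹` of the real points of
the quadric surface bundle `π₁ : Y → ℙ¹` has exactly three connected components;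
consequently `Y(ℝ)` has exactly three connected components (here the real isotopy class of
the discriminant quartic `Δ` is three ovals). -/
theorem three_ovals_example_three_components
    (S₁ : Set (RP 2))
    (hS₁ : S₁ = {x | ∃ t : {x : Fin 2 → ℝ // x ≠ 0}, Quot.mk (projRel 2) t = x ∧
      ∃ u v w : ℝ, (u, v, w) ≠ (0, 0, 0) ∧
        0 ≤ (t : Fin 2 → ℝ) 0 ^ 2 * Q₁ u v w
          + 2 * (t : Fin 2 → ℝ) 0 * (t : Fin 2 → ℝ) 1 * Q₂ u v w
          + (t : Fin 2 → ℝ) 1 ^ 2 * Q₃ u v w}) :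
    Nonempty (ConnectedComponents ↥S₁ ≃ Fin 3) := by
  have hS : S₁ = ⋃ i, affineChart '' arc i := by
    rw [← image_iUnion, iUnion_arc, ← setOf_exists_pencil_nonneg]
    exact hS₁
  subst hS
  exact nonempty_connectedComponents_iUnion_equiv
    (fun i => isOpenMap_affineChart _ (isOpen_arcNbhd i))
    (fun i j hij => (disjoint_image_iff affineChart_injective).mpr (pairwise_disjoint_arcNbhd hij))
    (fun i => image_mono (arc_subset_arcNbhd i))
    (fun i => (isConnected_arc i).image _ continuous_affineChart.continuousOn)
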